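/- Fix γ > 0 and a sign ε ∈ {+1, −1}. For each B > 0 the function r ↦ x_{B,ε}(r) is differentiable at every r ≠ 0, and for every fixed r ≠ 0 one has lim_{B→0⁺} x_{B,ε}(r) = sign(r)·√(π/(2γ))·|r|^{−1/2} and lim_{B→0⁺} (d/dr)x_{B,ε}(r) = −(√π/(2√(2γ)))·|r|^{−3/2}. -/

import Mathlib

/-!
Write `f_B(y) = (2√(y² + B²/4) + εB) y`, so that `x_B(r)` solves `f_B(y) = π/(γr)`. Since
`|εB| ≤ |B| ≤ 2√(y² + B²/4)`, `f_B` is strictly increasing with `f_B'(y) > 0` for `y ≠ 0`, for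
every `B`. Monotonicity makes `x_B` continuous, and implicit differentiation (through a local
inverse of `r ↦ π/(γr)`) gives `x_B'(r) = -(π/(γr²)) / f_B'(x_B(r))`. As `B → 0⁺`, `f_B` tends
pointwise to `f_0(y) = 2|y|y`, and monotonicity again forces `x_B(r)` to the root
`sign r · √(π/(2γ)) · |r|^(-1/2)` of `f_0(y) = π/(γr)`; as `f_B'(y)` is jointly continuous away
from `y = 0` and `f_0'(y) = 4|y|`, the derivatives converge as well.
-/

open Filter Topology Real

theorem HasDerivAt.of_comp_eq {𝕜 : Type*} [NontriviallyNormedField 𝕜]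
    [CompleteSpace 𝕜] {f u h : 𝕜 → 𝕜} {a f' h' : 𝕜} (hu : ContinuousAt u a)
    (hf : HasDerivAt f f' (u a)) (hf0 : f' ≠ 0) (hh : HasStrictDerivAt h h' a) (hh0 : h' ≠ 0)
    (heq : ∀ᶠ t in 𝓝 a, f (u t) = h t) : HasDerivAt u (h' / f') a := by
  set φ := hh.localInverse h h' a hh0
  have hφa : φ (h a) = a := (hh.eventually_left_inverse hh0).self_of_nhds
  have hφ : ContinuousAt φ (h a) := (hh.to_localInverse hh0).hasDerivAt.continuousAt
  have hinv : HasDerivAt (u ∘ φ) f'⁻¹ (h a) := by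
    refine .of_local_left_inverse (hu.comp_of_eq hφ hφa) (by simpa [hφa]) hf0 ?_
    filter_upwards [(hφa ▸ hφ.tendsto).eventually heq, hh.eventually_right_inverse hh0]
      with y hy hhy
    rw [Function.comp_apply, hy, hhy]
  rw [div_eq_inv_mul]
  refine (hinv.comp a hh.hasDerivAt).congr_of_eventuallyEq ?_
  filter_upwards [hh.eventually_left_inverse hh0] with t ht
  simp [φ, ht]

theorem tendsto_of_monotone_of_tendsto_comp {ι α β : Type*} [LinearOrder α] [TopologicalSpace α]
    [OrderTopology α] [LinearOrder β] [TopologicalSpace β] [OrderClosedTopology β]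
    {l : Filter ι} {F : ι → α → β} {f : α → β} {u : ι → α} {a : α}
    (hF : ∀ i, Monotone (F i)) (hf : StrictMono f)
    (hFf : ∀ y, Tendsto (fun i => F i y) l (𝓝 (f y)))
    (hu : Tendsto (fun i => F i (u i)) l (𝓝 (f a))) : Tendsto u l (𝓝 a) := by
  refine tendsto_order.2 ⟨fun b hb => ?_, fun b hb => ?_⟩
  · filter_upwards [(hFf b).eventually_lt hu (hf hb)] with i hi
    exact (hF i).reflect_lt hi
  · filter_upwards [hu.eventually_lt (hFf b) (hf hb)] with i hi
    exact (hF i).reflect_lt hi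

noncomputable def lhsMap (ε B y : ℝ) : ℝ := (2 * √(y ^ 2 + B ^ 2 / 4) + ε * B) * y

noncomputable def lhsMapDeriv (ε B y : ℝ) : ℝ :=
  2 * √(y ^ 2 + B ^ 2 / 4) + 2 * y ^ 2 / √(y ^ 2 + B ^ 2 / 4) + ε * B

section

variable {ε B y : ℝ}

theorem hasDerivAt_lhsMap (hy : y ≠ 0) : HasDerivAt (lhsMap ε B) (lhsMapDeriv ε B y) y := by
  have hq : y ^ 2 + B ^ 2 / 4 ≠ 0 := by positivity
  have hs : √(y ^ 2 + B ^ 2 / 4) ≠ 0 := by positivity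
  have hsqrt : HasDerivAt (fun y => √(y ^ 2 + B ^ 2 / 4)) (2 * y / (2 * √(y ^ 2 + B ^ 2 / 4))) y :=
    ((hasDerivAt_pow 2 y).add_const _).sqrt hq |>.congr_deriv (by ring)
  refine (((hsqrt.const_mul 2).add_const (ε * B)).mul (hasDerivAt_id' y)).congr_deriv ?_
  rw [lhsMapDeriv]
  field_simp
  ring

theorem abs_mul_le_two_sqrt_sq_add (hε : |ε| ≤ 1) : |ε * B| ≤ 2 * √(y ^ 2 + B ^ 2 / 4) := by
  calc |ε * B| ≤ |B| := by rw [abs_mul]; exact mul_le_of_le_one_left (abs_nonneg B) hε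
    _ = 2 * √((B / 2) ^ 2) := by rw [Real.sqrt_sq_eq_abs, abs_div, abs_two]; ring
    _ ≤ 2 * √(y ^ 2 + B ^ 2 / 4) := by gcongr; nlinarith [sq_nonneg y]

theorem lhsMapDeriv_pos (hε : |ε| ≤ 1) (hy : y ≠ 0) : 0 < lhsMapDeriv ε B y := by
  have : 0 < 2 * y ^ 2 / √(y ^ 2 + B ^ 2 / 4) := by positivity
  unfold lhsMapDeriv
  linarith [neg_abs_le (ε * B), abs_mul_le_two_sqrt_sq_add (B := B) (y := y) hε]

theorem strictMono_lhsMap (hε : |ε| ≤ 1) : StrictMono (lhsMap ε B) := by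
  have hcont : Continuous (lhsMap ε B) := by unfold lhsMap; fun_prop
  have hderiv (y : ℝ) (hy : y ≠ 0) : 0 < deriv (lhsMap ε B) y := by
    rw [(hasDerivAt_lhsMap hy).deriv]; exact lhsMapDeriv_pos hε hy
  refine StrictMonoOn.Iic_union_Ici (a := 0) ?_ ?_
  · refine strictMonoOn_of_deriv_pos (convex_Iic 0) hcont.continuousOn fun y hy => hderiv y ?_
    rw [interior_Iic] at hy
    exact hy.ne
  · refine strictMonoOn_of_deriv_pos (convex_Ici 0) hcont.continuousOn fun y hy => hderiv y ?_
    rw [interior_Ici] at hy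
    exact hy.ne'

end

theorem lhsMap_zero_right (ε B : ℝ) : lhsMap ε B 0 = 0 := by simp [lhsMap]

theorem lhsMap_zero_left (ε y : ℝ) : lhsMap ε 0 y = 2 * |y| * y := by
  simp [lhsMap, Real.sqrt_sq_eq_abs]

theorem lhsMapDeriv_zero_left (ε : ℝ) {y : ℝ} (hy : y ≠ 0) : lhsMapDeriv ε 0 y = 4 * |y| := by
  have : |y| ≠ 0 := abs_ne_zero.2 hy
  simp only [lhsMapDeriv, zero_pow two_ne_zero, zero_div, add_zero, mul_zero,
    Real.sqrt_sq_eq_abs, abs_abs, ← sq_abs y]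
  field_simp
  ring

theorem tendsto_lhsMapDeriv_nhdsGT_zero (ε : ℝ) {x : ℝ → ℝ} {y₀ : ℝ}
    (hx : Tendsto x (𝓝[>] 0) (𝓝 y₀)) (hy₀ : y₀ ≠ 0) :
    Tendsto (fun B => lhsMapDeriv ε B (x B)) (𝓝[>] 0) (𝓝 (4 * |y₀|)) := by
  have hs : √(y₀ ^ 2 + 0 ^ 2 / 4) ≠ 0 := by positivity
  have hsqrt : Continuous fun p : ℝ × ℝ => √(p.2 ^ 2 + p.1 ^ 2 / 4) := by fun_prop
  have hcont : ContinuousAt (fun p : ℝ × ℝ => lhsMapDeriv ε p.1 p.2) (0, y₀) := by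
    unfold lhsMapDeriv
    exact ((continuous_const.mul hsqrt).continuousAt.add
      ((continuous_const.mul (continuous_snd.pow 2)).continuousAt.div hsqrt.continuousAt hs)).add
      (continuous_const.mul continuous_fst).continuousAt
  have hpair : Tendsto (fun B => (B, x B)) (𝓝[>] 0) (𝓝 (0, y₀)) :=
    (tendsto_nhdsWithin_of_tendsto_nhds tendsto_id).prodMk_nhds hx
  have h := hcont.tendsto.comp hpair
  rwa [← lhsMapDeriv_zero_left ε hy₀]

section Solution

variable {ε κ : ℝ} (hε : |ε| ≤ 1)
include hε

theorem hasDerivAt_of_lhsMap_eq_div {B : ℝ} {u : ℝ → ℝ} (hκ : κ ≠ 0)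
    (hu : ∀ r ≠ 0, lhsMap ε B (u r) = κ / r) {r : ℝ} (hr : r ≠ 0) :
    HasDerivAt u (-(κ / r ^ 2) / lhsMapDeriv ε B (u r)) r := by
  have hur : u r ≠ 0 := by
    intro h
    have := hu r hr
    rw [h, lhsMap_zero_right] at this
    exact div_ne_zero hκ hr this.symm
  have hdiv : HasStrictDerivAt (fun t => κ / t) (-(κ / r ^ 2)) r := by
    simpa [div_eq_mul_inv] using (hasStrictDerivAt_inv hr).const_mul κ
  have heq : ∀ᶠ t in 𝓝 r, lhsMap ε B (u t) = κ / t := by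
    filter_upwards [eventually_ne_nhds hr] with t ht using hu t ht
  have hcont : ContinuousAt u r := by
    refine tendsto_of_monotone_of_tendsto_comp (F := fun _ => lhsMap ε B)
      (fun _ => (strictMono_lhsMap hε).monotone) (strictMono_lhsMap hε)
      (fun _ => tendsto_const_nhds) ?_
    rw [hu r hr]
    exact hdiv.hasDerivAt.continuousAt.tendsto.congr' (EventuallyEq.symm heq)
  exact .of_comp_eq hcont (hasDerivAt_lhsMap hur)
    (lhsMapDeriv_pos hε hur).ne' hdiv (neg_ne_zero.2 (div_ne_zero hκ (pow_ne_zero 2 hr))) heq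

theorem tendsto_of_lhsMap_eq {x : ℝ → ℝ} {y₀ : ℝ}
    (hx : ∀ B > 0, lhsMap ε B (x B) = lhsMap ε 0 y₀) : Tendsto x (𝓝[>] 0) (𝓝 y₀) := by
  refine tendsto_of_monotone_of_tendsto_comp (F := lhsMap ε)
    (fun _ => (strictMono_lhsMap hε).monotone) (strictMono_lhsMap (B := 0) hε) (fun y => ?_) ?_
  · exact ((show Continuous fun B => lhsMap ε B y by unfold lhsMap; fun_prop).tendsto' 0 _
      rfl).mono_left nhdsWithin_le_nhds
  · refine tendsto_const_nhds.congr' ?_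
    filter_upwards [self_mem_nhdsWithin] with B hB using (hx B hB).symm

end Solution

theorem abs_rpow_neg_half_eq (r : ℝ) : |r| ^ (-(1 / 2 : ℝ)) = (√|r|)⁻¹ := by
  rw [Real.rpow_neg (abs_nonneg r), Real.sqrt_eq_rpow]

theorem abs_rpow_neg_three_halves_eq (r : ℝ) : |r| ^ (-(3 / 2 : ℝ)) = (√|r| ^ 3)⁻¹ := by
  rw [Real.rpow_neg (abs_nonneg r), Real.sqrt_eq_rpow, ← Real.rpow_natCast,
    ← Real.rpow_mul (abs_nonneg r)]
  norm_num

theorem abs_sign_mul_sqrt_mul_rpow {r : ℝ} (hr : r ≠ 0) (c : ℝ) :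
    |Real.sign r * √c * |r| ^ (-(1 / 2 : ℝ))| = √c * (√|r|)⁻¹ := by
  have hsign : |Real.sign r| = 1 := by
    rcases hr.lt_or_gt with h | h <;> simp [Real.sign_of_neg, Real.sign_of_pos, h]
  rw [abs_mul, abs_mul, hsign, one_mul, abs_rpow_neg_half_eq, abs_of_nonneg (by positivity),
    abs_of_nonneg (by positivity)]

section Limit

variable {γ r : ℝ} (hγ : 0 < γ) (hr : r ≠ 0)
include hγ hr

theorem sign_mul_sqrt_mul_rpow_ne_zero :
    Real.sign r * √(π / (2 * γ)) * |r| ^ (-(1 / 2 : ℝ)) ≠ 0 := by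
  rw [← abs_pos, abs_sign_mul_sqrt_mul_rpow hr]
  have : 0 < |r| := abs_pos.2 hr
  positivity

theorem lhsMap_zero_left_sign_mul_sqrt_mul_rpow (ε : ℝ) :
    lhsMap ε 0 (Real.sign r * √(π / (2 * γ)) * |r| ^ (-(1 / 2 : ℝ))) = π / γ / r := by
  rw [lhsMap_zero_left, abs_sign_mul_sqrt_mul_rpow hr, abs_rpow_neg_half_eq]
  have hs : √|r| ^ 2 = |r| := Real.sq_sqrt (abs_nonneg r)
  have hc : √(π / (2 * γ)) ^ 2 = π / (2 * γ) := Real.sq_sqrt (by positivity)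
  have : √|r| ≠ 0 := by positivity
  have : |r| ≠ 0 := by positivity
  field_simp
  rw [hc, hs]
  rcases hr.lt_or_gt with h | h
  · rw [Real.sign_of_neg h, abs_of_neg h]; field_simp
  · rw [Real.sign_of_pos h, abs_of_pos h]; field_simp

theorem neg_div_sq_div_four_abs :
    -(π / γ / r ^ 2) / (4 * |Real.sign r * √(π / (2 * γ)) * |r| ^ (-(1 / 2 : ℝ))|) =
      -(√π / (2 * √(2 * γ))) * |r| ^ (-(3 / 2 : ℝ)) := by
  rw [abs_sign_mul_sqrt_mul_rpow hr, abs_rpow_neg_three_halves_eq,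
    Real.sqrt_div' π (by positivity : 0 ≤ 2 * γ)]
  have hr2 : r ^ 2 = √|r| ^ 4 := by
    rw [show 4 = 2 * 2 by rfl, pow_mul, Real.sq_sqrt (abs_nonneg r), sq_abs]
  have hp : √π ^ 2 = π := Real.sq_sqrt Real.pi_pos.le
  have hq : √(2 * γ) ^ 2 = 2 * γ := Real.sq_sqrt (by positivity)
  have : √|r| ≠ 0 := by positivity
  have : √π ≠ 0 := by positivity
  have : √(2 * γ) ≠ 0 := by positivity
  rw [hr2]
  field_simp
  rw [mul_comm γ 2, hp, hq]
  ring

end Limit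

theorem stmt_2 (γ : ℝ) (hγ : 0 < γ) (ε : ℝ) (hε : ε = 1 ∨ ε = -1)
    (x : ℝ → ℝ → ℝ)
    (hx : ∀ B : ℝ, 0 < B → ∀ r : ℝ, r ≠ 0 →
      (2 * Real.sqrt (x B r ^ 2 + B ^ 2 / 4) + ε * B) * x B r = Real.pi / (γ * r)) :
    (∀ B : ℝ, 0 < B → ∀ r : ℝ, r ≠ 0 → DifferentiableAt ℝ (x B) r) ∧
    (∀ r : ℝ, r ≠ 0 →
      Tendsto (fun B => x B r) (𝓝[>] 0)
        (𝓝 (Real.sign r * Real.sqrt (Real.pi / (2 * γ)) * |r| ^ (-(1 / 2 : ℝ))))) ∧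
    (∀ r : ℝ, r ≠ 0 →
      Tendsto (fun B => deriv (x B) r) (𝓝[>] 0)
        (𝓝 (-(Real.sqrt Real.pi / (2 * Real.sqrt (2 * γ))) * |r| ^ (-(3 / 2 : ℝ))))) := by
  have hε₁ : |ε| ≤ 1 := by rcases hε with rfl | rfl <;> simp
  have hsol (B : ℝ) (hB : 0 < B) (r : ℝ) (hr : r ≠ 0) : lhsMap ε B (x B r) = π / γ / r := by
    rw [div_div]; exact hx B hB r hr
  have hderiv (B : ℝ) (hB : 0 < B) (r : ℝ) (hr : r ≠ 0) :=
    hasDerivAt_of_lhsMap_eq_div hε₁ (by positivity) (hsol B hB) hr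
  have hlim (r : ℝ) (hr : r ≠ 0) : Tendsto (fun B => x B r) (𝓝[>] 0)
      (𝓝 (Real.sign r * √(π / (2 * γ)) * |r| ^ (-(1 / 2 : ℝ)))) :=
    tendsto_of_lhsMap_eq hε₁ fun B hB => by
      rw [hsol B hB r hr, lhsMap_zero_left_sign_mul_sqrt_mul_rpow hγ hr]
  refine ⟨fun B hB r hr => (hderiv B hB r hr).differentiableAt, hlim, fun r hr => ?_⟩
  have hy₀ := sign_mul_sqrt_mul_rpow_ne_zero hγ hr
  rw [← neg_div_sq_div_four_abs hγ hr]
  refine (tendsto_const_nhds.div (tendsto_lhsMapDeriv_nhdsGT_zero ε (hlim r hr) hy₀)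
    (by positivity)).congr' ?_
  filter_upwards [self_mem_nhdsWithin] with B hB using ((hderiv B hB r hr).deriv).symm
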